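/- arXiv:2602.15079 — 5 statements merged into one kernel-verified Lean document; each statement's English description precedes it below -/
import Mathlib

section
/- Let Ω be a finite probability space with weights w, and let c, h, h̃ : Ω → Fin 2 be random variables. Assume: (i) P(c = j) = 1/2 for j = 0,1; (ii) P(h = j) = 1/2 for j = 0,1; (iii) P(h = j ∧ c = j) = A/2 for j = 0,1, where A := P(h = c); (iv) P(h̃ = j ∧ h = k ∧ c = l) · P(h = k) = P(h̃ = j ∧ h = k) · P(h = k ∧ c = l) for all j,k,l. Then Ã − A = (1 − 2A)(1 − A*), where Ã := P(h̃ = c) and A* := P(h̃ = h). In particular the gap between robustness accuracy and accuracy factors into a term depending only on A and a term depending only on A*. -/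
/-!
Conditional independence of `h̃` and `c` given `h`, together with `P(h = k) = 1/2`, factors the
joint law as `P(h̃ = j, h = k, c = l) = 2 P(h̃ = j, h = k) P(h = k, c = l)`. The balance
assumption pins `P(h = k, c = l)` to `A/2` on the diagonal and `(1 - A)/2` off it, so
`Ã = A A* + (1 - A)(1 - A*)`, and the gap factors.
-/

open Classical in
/-- Probability of an event `E` on a finite probability space with weights `w`. -/
noncomputable def prob {Ω : Type*} [Fintype Ω] (w : Ω → ℝ) (E : Ω → Prop) : ℝ :=
  ∑ ω, if E ω then w ω else 0

section Prob

variable {Ω : Type*} [Fintype Ω] (w : Ω → ℝ)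

theorem prob_congr {E F : Ω → Prop} (hEF : ∀ ω, E ω ↔ F ω) : prob w E = prob w F := by
  rw [show E = F from funext fun ω => propext (hEF ω)]

theorem prob_eq_sum_prob_and {ι : Type*} [Fintype ι] (E : Ω → Prop) (f : Ω → ι) :
    prob w E = ∑ i, prob w (fun ω => E ω ∧ f ω = i) := by
  classical
  unfold prob
  rw [Finset.sum_comm]
  refine Finset.sum_congr rfl fun ω _ => ?_
  by_cases hE : E ω <;> simp [hE]

theorem prob_eq_eq_sum_prob_and {ι : Type*} [Fintype ι] (f g : Ω → ι) :
    prob w (fun ω => f ω = g ω) = ∑ i, prob w (fun ω => f ω = i ∧ g ω = i) := by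
  rw [prob_eq_sum_prob_and w _ g]
  exact Finset.sum_congr rfl fun i _ => prob_congr w fun ω => by
    constructor
    · rintro ⟨hfg, rfl⟩; exact ⟨hfg, rfl⟩
    · rintro ⟨hf, hg⟩; exact ⟨hf.trans hg.symm, hg⟩

end Prob

theorem robustness_accuracy_gap_general
    {Ω : Type*} [Fintype Ω] (w : Ω → ℝ)
    (c h ht : Ω → Fin 2)
    (hmodel : ∀ j : Fin 2, prob w (fun ω => h ω = j) = 1 / 2)
    (hbal : ∀ j : Fin 2, prob w (fun ω => h ω = j ∧ c ω = j)
      = prob w (fun ω => h ω = c ω) / 2)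
    (hcondind : ∀ j k l : Fin 2,
      prob w (fun ω => ht ω = j ∧ h ω = k ∧ c ω = l) * prob w (fun ω => h ω = k)
        = prob w (fun ω => ht ω = j ∧ h ω = k) * prob w (fun ω => h ω = k ∧ c ω = l)) :
    prob w (fun ω => ht ω = c ω) - prob w (fun ω => h ω = c ω)
      = (1 - 2 * prob w (fun ω => h ω = c ω))
        * (1 - prob w (fun ω => ht ω = h ω)) := by
  set A := prob w (fun ω => h ω = c ω)
  set q : Fin 2 → Fin 2 → ℝ := fun j k => prob w (fun ω => ht ω = j ∧ h ω = k)
  set r : Fin 2 → Fin 2 → ℝ := fun k l => prob w (fun ω => h ω = k ∧ c ω = l)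
  have hjoint : ∀ j k l, prob w (fun ω => ht ω = j ∧ h ω = k ∧ c ω = l) = 2 * q j k * r k l := by
    intro j k l
    have hci := hcondind j k l
    rw [hmodel k] at hci
    linarith
  have hrob : prob w (fun ω => ht ω = c ω) = ∑ l, ∑ k, 2 * q l k * r k l := by
    rw [prob_eq_eq_sum_prob_and]
    refine Finset.sum_congr rfl fun l _ => ?_
    rw [prob_eq_sum_prob_and w _ h]
    refine Finset.sum_congr rfl fun k _ => ?_
    rw [← hjoint]
    exact prob_congr w fun ω => by tauto
  have hstar : prob w (fun ω => ht ω = h ω) = ∑ k, q k k := prob_eq_eq_sum_prob_and w ht h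
  have hq_sum : ∀ k, ∑ j, q j k = 1 / 2 := by
    intro k
    rw [← hmodel k, prob_eq_sum_prob_and w _ ht]
    exact Finset.sum_congr rfl fun j _ => prob_congr w fun ω => and_comm
  have hr_sum : ∀ k, ∑ l, r k l = 1 / 2 := fun k => by
    rw [← hmodel k, prob_eq_sum_prob_and w _ c]
  have hr0 : r 0 0 = A / 2 := hbal 0
  have hr1 : r 1 1 = A / 2 := hbal 1
  simp only [Fin.sum_univ_two] at hrob hstar hq_sum hr_sum
  rw [hrob, hstar]
  linear_combination (1 - A) * (hq_sum 0 + hq_sum 1) + 2 * q 0 0 * hr0 + 2 * q 1 1 * hr1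
    + 2 * q 0 1 * (hr_sum 1 - hr1) + 2 * q 1 0 * (hr_sum 0 - hr0)

/-- **Gap formula.** Under the unbiased assumptions of Theorem 1,
`Ã − A = (1 − 2A)(1 − A*)`. -/
theorem robustness_accuracy_gap
    {Ω : Type*} [Fintype Ω] (w : Ω → ℝ)
    (hw0 : ∀ ω, 0 ≤ w ω) (hw1 : ∑ ω, w ω = 1)
    (c h ht : Ω → Fin 2)
    (hdata : ∀ j : Fin 2, prob w (fun ω => c ω = j) = 1 / 2)
    (hmodel : ∀ j : Fin 2, prob w (fun ω => h ω = j) = 1 / 2)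
    (hbal : ∀ j : Fin 2, prob w (fun ω => h ω = j ∧ c ω = j)
      = prob w (fun ω => h ω = c ω) / 2)
    (hcondind : ∀ j k l : Fin 2,
      prob w (fun ω => ht ω = j ∧ h ω = k ∧ c ω = l) * prob w (fun ω => h ω = k)
        = prob w (fun ω => ht ω = j ∧ h ω = k) * prob w (fun ω => h ω = k ∧ c ω = l)) :
    prob w (fun ω => ht ω = c ω) - prob w (fun ω => h ω = c ω)
      = (1 - 2 * prob w (fun ω => h ω = c ω))
        * (1 - prob w (fun ω => ht ω = h ω)) :=
  robustness_accuracy_gap_general w c h ht hmodel hbal hcondind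
end

section
/- Let Ω be a finite probability space with weights w, and let c, h, h̃ : Ω → Fin 2 be random variables. Assume: (i) P(c = j) = 1/2 for j = 0,1; (ii) P(h = j) = 1/2 for j = 0,1; (iii) P(h = j ∧ c = j) = A/2 for j = 0,1, where A := P(h = c); (iv) P(h̃ = j ∧ h = k ∧ c = l) · P(h = k) = P(h̃ = j ∧ h = k) · P(h = k ∧ c = l) for all j,k,l. Then the robustness accuracy equals the accuracy, Ã = A, if and only if A* = 1 or A = 1/2, where Ã := P(h̃ = c) and A* := P(h̃ = h). In particular, if the model is perfectly prediction-change robust (A* = 1) then no accuracy is lost under the perturbation. -/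
/-!
Conditional independence of `h̃` and `c` given `h`, together with `P(h = k) = 1/2`, gives
`P(h̃ = j ∧ h = k ∧ c = l) = 2 P(h̃ = j ∧ h = k) P(h = k ∧ c = l)`, and the balance assumption
evaluates the last factor to `A/2` if `l = k` and to `(1 - A)/2` otherwise. Summing over `h̃ = c`
yields `Ã = A A* + (1 - A)(1 - A*)`, that is `Ã - A = (2A - 1)(A* - 1)`. Here
`A = agreement w h c`, `Ã = agreement w ht c` and `A* = agreement w ht h`.
-/

section Prob

variable {Ω : Type*} [Fintype Ω] (w : Ω → ℝ)

theorem prob_eq_sum_prob_and_eq {α : Type*} [Fintype α] (E : Ω → Prop) (X : Ω → α) :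
    prob w E = ∑ a, prob w (fun ω => E ω ∧ X ω = a) := by
  classical
  unfold prob
  rw [Finset.sum_comm]
  refine Finset.sum_congr rfl fun ω _ => ?_
  by_cases hE : E ω <;> simp [hE]

noncomputable def agreement {α : Type*} (f g : Ω → α) : ℝ :=
  prob w (fun ω => f ω = g ω)

end Prob

section Binary

variable {Ω : Type*} [Fintype Ω] {w : Ω → ℝ} {c h ht : Ω → Fin 2}

theorem prob_and_eq_of_ne (hmodel : ∀ k : Fin 2, prob w (fun ω => h ω = k) = 1 / 2)
    (hbal : ∀ k : Fin 2, prob w (fun ω => h ω = k ∧ c ω = k) = agreement w h c / 2)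
    {k l : Fin 2} (hkl : k ≠ l) :
    prob w (fun ω => h ω = k ∧ c ω = l) = (1 - agreement w h c) / 2 := by
  have hsplit (k : Fin 2) : prob w (fun ω => h ω = k ∧ c ω = 0)
      + prob w (fun ω => h ω = k ∧ c ω = 1) = 1 / 2 := by
    have hk := prob_eq_sum_prob_and_eq w (fun ω => h ω = k) c
    rwa [hmodel, Fin.sum_univ_two, eq_comm] at hk
  match k, l, hkl with
  | 0, 0, hkl | 1, 1, hkl => exact (hkl rfl).elim
  | 0, 1, _ => linarith [hsplit 0, hbal 0]
  | 1, 0, _ => linarith [hsplit 1, hbal 1]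

theorem agreement_eq_of_condIndep
    (hmodel : ∀ k : Fin 2, prob w (fun ω => h ω = k) = 1 / 2)
    (hbal : ∀ k : Fin 2, prob w (fun ω => h ω = k ∧ c ω = k) = agreement w h c / 2)
    (hcondind : ∀ j k l : Fin 2,
      prob w (fun ω => ht ω = j ∧ h ω = k ∧ c ω = l) * prob w (fun ω => h ω = k)
        = prob w (fun ω => ht ω = j ∧ h ω = k) * prob w (fun ω => h ω = k ∧ c ω = l)) :
    agreement w ht c = agreement w h c * agreement w ht h
      + (1 - agreement w h c) * (1 - agreement w ht h) := by
  have hjoint (j k l : Fin 2) : prob w (fun ω => ht ω = j ∧ h ω = k ∧ c ω = l)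
      = 2 * prob w (fun ω => ht ω = j ∧ h ω = k) * prob w (fun ω => h ω = k ∧ c ω = l) := by
    linarith [hmodel k ▸ hcondind j k l]
  have hrobust : agreement w ht c
      = ∑ k, ∑ l, prob w (fun ω => ht ω = l ∧ h ω = k ∧ c ω = l) := by
    rw [agreement, prob_eq_sum_prob_and_eq w _ h]
    refine Finset.sum_congr rfl fun k _ => ?_
    rw [prob_eq_sum_prob_and_eq w _ c]
    exact Finset.sum_congr rfl fun l _ => prob_congr w fun ω => by grind
  have hstable : agreement w ht h = ∑ k, prob w (fun ω => ht ω = k ∧ h ω = k) := by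
    rw [agreement, prob_eq_sum_prob_and_eq w _ h]
    exact Finset.sum_congr rfl fun k _ => prob_congr w fun ω => by grind
  have htotal : ∑ k, ∑ j, prob w (fun ω => ht ω = j ∧ h ω = k) = 1 := by
    calc ∑ k, ∑ j, prob w (fun ω => ht ω = j ∧ h ω = k)
        = ∑ k, prob w (fun ω => h ω = k) := by
          refine Finset.sum_congr rfl fun k _ => ?_
          rw [prob_eq_sum_prob_and_eq w _ ht]
          exact Finset.sum_congr rfl fun j _ => prob_congr w fun ω => and_comm
      _ = 1 := by rw [Fin.sum_univ_two, hmodel, hmodel]; norm_num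
  rw [hrobust, hstable]
  simp only [Fin.sum_univ_two, hjoint, hbal, prob_and_eq_of_ne hmodel hbal zero_ne_one,
    prob_and_eq_of_ne hmodel hbal one_ne_zero] at htotal ⊢
  linear_combination (1 - agreement w h c) * htotal

end Binary

theorem robustness_accuracy_no_loss_iff_general
    {Ω : Type*} [Fintype Ω] (w : Ω → ℝ)
    (c h ht : Ω → Fin 2)
    (hmodel : ∀ j : Fin 2, prob w (fun ω => h ω = j) = 1 / 2)
    (hbal : ∀ j : Fin 2, prob w (fun ω => h ω = j ∧ c ω = j)
      = prob w (fun ω => h ω = c ω) / 2)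
    (hcondind : ∀ j k l : Fin 2,
      prob w (fun ω => ht ω = j ∧ h ω = k ∧ c ω = l) * prob w (fun ω => h ω = k)
        = prob w (fun ω => ht ω = j ∧ h ω = k) * prob w (fun ω => h ω = k ∧ c ω = l)) :
    prob w (fun ω => ht ω = c ω) = prob w (fun ω => h ω = c ω)
      ↔ prob w (fun ω => ht ω = h ω) = 1 ∨ prob w (fun ω => h ω = c ω) = 1 / 2 := by
  have hloss : agreement w ht c - agreement w h c
      = (agreement w ht h - 1) * (2 * agreement w h c - 1) := by
    rw [agreement_eq_of_condIndep hmodel hbal hcondind]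
    ring
  change agreement w ht c = agreement w h c ↔ agreement w ht h = 1 ∨ agreement w h c = 1 / 2
  rw [← sub_eq_zero, hloss, mul_eq_zero, sub_eq_zero, sub_eq_zero]
  exact or_congr_right ⟨fun hA => by linarith, fun hA => by linarith⟩

/-- Under the unbiased assumptions of Theorem 1, `Ã = A` iff `A* = 1` or `A = 1/2`. -/
theorem robustness_accuracy_no_loss_iff
    {Ω : Type*} [Fintype Ω] (w : Ω → ℝ)
    (hw0 : ∀ ω, 0 ≤ w ω) (hw1 : ∑ ω, w ω = 1)
    (c h ht : Ω → Fin 2)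
    (hdata : ∀ j : Fin 2, prob w (fun ω => c ω = j) = 1 / 2)
    (hmodel : ∀ j : Fin 2, prob w (fun ω => h ω = j) = 1 / 2)
    (hbal : ∀ j : Fin 2, prob w (fun ω => h ω = j ∧ c ω = j)
      = prob w (fun ω => h ω = c ω) / 2)
    (hcondind : ∀ j k l : Fin 2,
      prob w (fun ω => ht ω = j ∧ h ω = k ∧ c ω = l) * prob w (fun ω => h ω = k)
        = prob w (fun ω => ht ω = j ∧ h ω = k) * prob w (fun ω => h ω = k ∧ c ω = l)) :
    prob w (fun ω => ht ω = c ω) = prob w (fun ω => h ω = c ω)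
      ↔ prob w (fun ω => ht ω = h ω) = 1 ∨ prob w (fun ω => h ω = c ω) = 1 / 2 :=
  robustness_accuracy_no_loss_iff_general w c h ht hmodel hbal hcondind
end

section
/- Let Σ⁺ and Σ⁻ be n×n density matrices, let Π₁ be an n×n effect, and let {E_l}_{l ∈ L} be a finite family of n×n complex matrices with Σ_l E_l E_l† = I. Define Σ̃^± := Σ_l E_l† Σ^± E_l, A_s := (1/2)·Re Tr(Π₁Σ⁺) + (1/2)·Re Tr((I − Π₁)Σ⁻), Ã_s := (1/2)·Re Tr(Π₁Σ̃⁺) + (1/2)·Re Tr((I − Π₁)Σ̃⁻), Σ_A := (1/2)(Σ̃⁺ + Σ⁻) and Σ_B := (1/2)(Σ⁺ + Σ̃⁻). Then |Ã_s − A_s| ≤ τ(Σ_A, Σ_B), where τ(Σ_A, Σ_B) := (1/2)·Σ_i |λ_i| and λ_1, …, λ_n are the eigenvalues (with multiplicity) of the Hermitian matrix Σ_A − Σ_B. -/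
/-!
Since `∑ Eₗ Eₗᴴ = 1`, the map `S ↦ ∑ Eₗᴴ S Eₗ` preserves traces, so `Tr Σ̃⁻ = Tr Σ⁻` and the
accuracy gap `Ãₛ - Aₛ` is exactly `Re Tr(Π₁ D)` for the traceless Hermitian matrix
`D = Σ_A - Σ_B`. Writing `D = ∑ λᵢ uᵢuᵢᴴ`, this is `∑ λᵢ cᵢ` with `cᵢ = ⟨uᵢ, Π₁ uᵢ⟩ ∈ [0, 1]`
because `Π₁` is an effect; as `∑ λᵢ = 0`, it equals `∑ λᵢ (cᵢ - 1/2)`, whose absolute value is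
at most `(1/2) ∑ |λᵢ|`.
-/

open Matrix Finset
open scoped ComplexOrder

theorem abs_sum_mul_le_half_sum_abs {ι : Type*} (s : Finset ι) (a c : ι → ℝ)
    (ha : ∑ i ∈ s, a i = 0) (hc : ∀ i ∈ s, c i ∈ Set.Icc (0 : ℝ) 1) :
    |∑ i ∈ s, c i * a i| ≤ 1 / 2 * ∑ i ∈ s, |a i| := by
  have hshift : ∑ i ∈ s, c i * a i = ∑ i ∈ s, (c i - 1 / 2) * a i := by
    simp only [sub_mul, sum_sub_distrib, ← mul_sum, ha, mul_zero, sub_zero]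
  calc |∑ i ∈ s, c i * a i| ≤ ∑ i ∈ s, |c i - 1 / 2| * |a i| := by
        rw [hshift]
        simpa only [abs_mul] using abs_sum_le_sum_abs (fun i => (c i - 1 / 2) * a i) s
    _ ≤ ∑ i ∈ s, 1 / 2 * |a i| := by
        gcongr with i hi
        obtain ⟨h0, h1⟩ := hc i hi
        exact abs_le.mpr ⟨by linarith, by linarith⟩
    _ = 1 / 2 * ∑ i ∈ s, |a i| := by rw [mul_sum]

namespace Matrix

variable {n 𝕜 : Type*} [DecidableEq n] [RCLike 𝕜]

theorem trace_sum_conjTranspose_mul_mul_eq [Fintype n] {R ι : Type*} [CommSemiring R] [StarRing R]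
    [Fintype ι] {E : ι → Matrix n n R} (hE : ∑ l, E l * (E l)ᴴ = 1) (S : Matrix n n R) :
    (∑ l, (E l)ᴴ * S * E l).trace = S.trace := by
  rw [trace_sum]
  simp only [trace_mul_cycle _ S]
  rw [← trace_sum, ← sum_mul, hE, one_mul]

theorem PosSemidef.re_diag_mem_Icc {P : Matrix n n 𝕜} (hP : P.PosSemidef)
    (hP' : (1 - P).PosSemidef) (i : n) : RCLike.re (P i i) ∈ Set.Icc (0 : ℝ) 1 := by
  have h1 := (RCLike.nonneg_iff.mp (hP'.diag_nonneg (i := i))).1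
  simp only [sub_apply, one_apply_eq, map_sub, RCLike.one_re] at h1
  exact ⟨(RCLike.nonneg_iff.mp (hP.diag_nonneg (i := i))).1, by linarith⟩

theorem IsHermitian.trace_mul_eq_sum_eigenvalues [Fintype n] {A : Matrix n n 𝕜}
    (hA : A.IsHermitian) (B : Matrix n n 𝕜) :
    (B * A).trace = ∑ i, (star (hA.eigenvectorUnitary : Matrix n n 𝕜) * B *
      hA.eigenvectorUnitary) i i * hA.eigenvalues i := by
  conv_lhs => rw [hA.spectral_theorem, Unitary.conjStarAlgAut_apply, ← mul_assoc, trace_mul_cycle,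
    ← mul_assoc]
  simp [trace, mul_diagonal]

theorem IsHermitian.abs_re_trace_mul_le [Fintype n] {A P : Matrix n n 𝕜} (hA : A.IsHermitian)
    (hA0 : A.trace = 0) (hP : P.PosSemidef) (hP' : (1 - P).PosSemidef) :
    |RCLike.re (P * A).trace| ≤ 1 / 2 * ∑ i, |hA.eigenvalues i| := by
  set U : Matrix n n 𝕜 := ↑hA.eigenvectorUnitary
  have hUU : star U * U = 1 := Unitary.coe_star_mul_self _
  have hM : (star U * P * U).PosSemidef := hP.conjTranspose_mul_mul_same U
  have hM' : (1 - star U * P * U).PosSemidef := by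
    have := hP'.conjTranspose_mul_mul_same U
    rwa [mul_sub, sub_mul, mul_one, ← star_eq_conjTranspose, hUU] at this
  have hsum : ∑ i, hA.eigenvalues i = 0 := by
    have := hA.trace_eq_sum_eigenvalues
    rw [hA0] at this
    exact_mod_cast this.symm
  rw [hA.trace_mul_eq_sum_eigenvalues, map_sum]
  simp only [RCLike.re_mul_ofReal]
  exact abs_sum_mul_le_half_sum_abs _ _ _ hsum fun i _ => hM.re_diag_mem_Icc hM' i

end Matrix

theorem robustness_accuracy_trace_distance_bound_general
    {n : ℕ} {L : Type*} [Fintype L]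
    (Sp Sm P1 : Matrix (Fin n) (Fin n) ℂ)
    (hP1pos : P1.PosSemidef) (hP1eff : (1 - P1).PosSemidef)
    (E : L → Matrix (Fin n) (Fin n) ℂ)
    (hE : ∑ l, E l * (E l)ᴴ = 1)
    (Spt Smt : Matrix (Fin n) (Fin n) ℂ)
    (hSpt : Spt = ∑ l, (E l)ᴴ * Sp * E l)
    (hSmt : Smt = ∑ l, (E l)ᴴ * Sm * E l)
    (As Ats : ℝ)
    (hAs : As = (1 / 2) * ((P1 * Sp).trace).re
        + (1 / 2) * (((1 - P1) * Sm).trace).re)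
    (hAts : Ats = (1 / 2) * ((P1 * Spt).trace).re
        + (1 / 2) * (((1 - P1) * Smt).trace).re)
    (SA SB : Matrix (Fin n) (Fin n) ℂ)
    (hSA : SA = (1 / 2 : ℂ) • (Spt + Sm))
    (hSB : SB = (1 / 2 : ℂ) • (Sp + Smt))
    (hD : (SA - SB).IsHermitian) :
    |Ats - As| ≤ (1 / 2) * ∑ i, |hD.eigenvalues i| := by
  have hSpt_tr : Spt.trace = Sp.trace := hSpt ▸ trace_sum_conjTranspose_mul_mul_eq hE Sp
  have hSmt_tr : Smt.trace = Sm.trace := hSmt ▸ trace_sum_conjTranspose_mul_mul_eq hE Sm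
  have hgap : Ats - As = ((P1 * (SA - SB)).trace).re := by
    rw [hAs, hAts, hSA, hSB]
    simp only [Matrix.sub_mul, Matrix.mul_sub, Matrix.mul_smul, Matrix.mul_add, one_mul,
      trace_sub, trace_smul, trace_add, hSmt_tr, smul_eq_mul, Complex.sub_re, Complex.add_re,
      Complex.mul_re]
    norm_num
    ring
  have htr : (SA - SB).trace = 0 := by
    rw [hSA, hSB, trace_sub, trace_smul, trace_smul, trace_add, trace_add, hSpt_tr, hSmt_tr]
    ring
  rw [hgap]
  exact hD.abs_re_trace_mul_le htr hP1pos hP1eff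

/-- **Lemma 1, inequality part.** The gap between the robustness accuracy and the
accuracy of the stochastic binary classifier under a unital Kraus perturbation of
the measurement is bounded by the trace distance between the mixtures
`Σ_A = (Σ̃⁺ + Σ⁻)/2` and `Σ_B = (Σ⁺ + Σ̃⁻)/2`. -/
theorem robustness_accuracy_trace_distance_bound
    {n : ℕ} {L : Type*} [Fintype L]
    (Sp Sm P1 : Matrix (Fin n) (Fin n) ℂ)
    (hSp : Sp.PosSemidef) (hSptr : Sp.trace = 1)
    (hSm : Sm.PosSemidef) (hSmtr : Sm.trace = 1)
    (hP1pos : P1.PosSemidef) (hP1eff : (1 - P1).PosSemidef)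
    (E : L → Matrix (Fin n) (Fin n) ℂ)
    (hE : ∑ l, E l * (E l)ᴴ = 1)
    (Spt Smt : Matrix (Fin n) (Fin n) ℂ)
    (hSpt : Spt = ∑ l, (E l)ᴴ * Sp * E l)
    (hSmt : Smt = ∑ l, (E l)ᴴ * Sm * E l)
    (As Ats : ℝ)
    (hAs : As = (1 / 2) * ((P1 * Sp).trace).re
        + (1 / 2) * (((1 - P1) * Sm).trace).re)
    (hAts : Ats = (1 / 2) * ((P1 * Spt).trace).re
        + (1 / 2) * (((1 - P1) * Smt).trace).re)
    (SA SB : Matrix (Fin n) (Fin n) ℂ)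
    (hSA : SA = (1 / 2 : ℂ) • (Spt + Sm))
    (hSB : SB = (1 / 2 : ℂ) • (Sp + Smt))
    (hD : (SA - SB).IsHermitian) :
    |Ats - As| ≤ (1 / 2) * ∑ i, |hD.eigenvalues i| :=
  robustness_accuracy_trace_distance_bound_general Sp Sm P1 hP1pos hP1eff E hE Spt Smt hSpt hSmt As
    Ats hAs hAts SA SB hSA hSB hD
end

section
/- Work with 2×2 complex matrices; let X, Y, Z be the standard Pauli matrices and let Π₁ = |0⟩⟨0| (the diagonal matrix diag(1,0)). Let Σ⁺ and Σ⁻ be 2×2 density matrices and let p₀, p₁, p₂, p₃ ≥ 0 with p₀ + p₁ + p₂ + p₃ = 1. Define the Pauli-channel outputs Σ̃^± := p₀Σ^± + p₁XΣ^±X + p₂YΣ^±Y + p₃ZΣ^±Z, the accuracy A_s := (1/2)·Re Tr(Π₁Σ⁺) + (1/2)·Re Tr((I − Π₁)Σ⁻), and the robustness accuracy Ã_s := (1/2)·Re Tr(Π₁Σ̃⁺) + (1/2)·Re Tr((I − Π₁)Σ̃⁻). Then Ã_s − 1/2 = (1 − 2(p₁ + p₂)) · (A_s − 1/2). In particular Ã_s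 is a decreasing affine function of A_s (a trade-off) exactly when p₁ + p₂ > 1/2, and for a pure phase-flip channel (p₁ = p₂ = 0) there is never a trade-off. -/
/-!
A measurement diagonal in the computational basis only sees the diagonal of a state. On the
diagonal, conjugation by `X` or `Y` swaps the two populations and conjugation by `Z` fixes them,
so the Pauli channel acts on the populations as a classical bit flip with probability
`q = p₁ + p₂`. A bit flip with probability `q` rescales every deviation of an accuracy from `1/2`
by `1 - 2q`; the trace conditions are what turn the population `σ₁₁` into `1 - σ₀₀`.
-/

open Matrix
open scoped ComplexOrder

section Diagonal

variable {R : Type*}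

lemma trace_proj_zero_mul [Semiring R] (A : Matrix (Fin 2) (Fin 2) R) :
    ((!![1, 0; 0, 0] : Matrix (Fin 2) (Fin 2) R) * A).trace = A 0 0 := by
  simp [trace_fin_two, vecMul, dotProduct]

lemma trace_one_sub_proj_zero_mul [Ring R] (A : Matrix (Fin 2) (Fin 2) R) :
    ((1 - !![1, 0; 0, 0] : Matrix (Fin 2) (Fin 2) R) * A).trace = A 1 1 := by
  simp [trace_fin_two, vecMul, dotProduct, one_fin_two]

lemma pauliX_conj_apply_zero_zero [Semiring R] (A : Matrix (Fin 2) (Fin 2) R) :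
    (!![0, 1; 1, 0] * A * !![0, 1; 1, 0] : Matrix (Fin 2) (Fin 2) R) 0 0 = A 1 1 := by
  simp [mul_apply, Fin.sum_univ_two, vecMul, dotProduct]

lemma pauliX_conj_apply_one_one [Semiring R] (A : Matrix (Fin 2) (Fin 2) R) :
    (!![0, 1; 1, 0] * A * !![0, 1; 1, 0] : Matrix (Fin 2) (Fin 2) R) 1 1 = A 0 0 := by
  simp [mul_apply, Fin.sum_univ_two, vecMul, dotProduct]

lemma pauliZ_conj_apply_zero_zero [Ring R] (A : Matrix (Fin 2) (Fin 2) R) :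
    (!![1, 0; 0, -1] * A * !![1, 0; 0, -1] : Matrix (Fin 2) (Fin 2) R) 0 0 = A 0 0 := by
  simp [mul_apply, Fin.sum_univ_two, vecMul, dotProduct]

lemma pauliZ_conj_apply_one_one [Ring R] (A : Matrix (Fin 2) (Fin 2) R) :
    (!![1, 0; 0, -1] * A * !![1, 0; 0, -1] : Matrix (Fin 2) (Fin 2) R) 1 1 = A 1 1 := by
  simp [mul_apply, Fin.sum_univ_two, vecMul, dotProduct]

end Diagonal

lemma pauliY_conj_apply_zero_zero (A : Matrix (Fin 2) (Fin 2) ℂ) :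
    (!![0, -Complex.I; Complex.I, 0] * A * !![0, -Complex.I; Complex.I, 0]) 0 0 = A 1 1 := by
  simp [mul_apply, Fin.sum_univ_two, vecMul, dotProduct, mul_comm _ Complex.I, ← mul_assoc]

lemma pauliY_conj_apply_one_one (A : Matrix (Fin 2) (Fin 2) ℂ) :
    (!![0, -Complex.I; Complex.I, 0] * A * !![0, -Complex.I; Complex.I, 0]) 1 1 = A 0 0 := by
  simp [mul_apply, Fin.sum_univ_two, vecMul, dotProduct, mul_comm _ Complex.I, ← mul_assoc]

section PauliChannel

variable (p0 p1 p2 p3 : ℂ) (A : Matrix (Fin 2) (Fin 2) ℂ)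

lemma pauliChannel_apply_zero_zero :
    (p0 • A + p1 • (!![0, 1; 1, 0] * A * !![0, 1; 1, 0])
      + p2 • (!![0, -Complex.I; Complex.I, 0] * A * !![0, -Complex.I; Complex.I, 0])
      + p3 • (!![1, 0; 0, -1] * A * !![1, 0; 0, -1]) : Matrix (Fin 2) (Fin 2) ℂ) 0 0
      = (p0 + p3) * A 0 0 + (p1 + p2) * A 1 1 := by
  simp only [Matrix.add_apply, Matrix.smul_apply, smul_eq_mul, pauliX_conj_apply_zero_zero,
    pauliY_conj_apply_zero_zero, pauliZ_conj_apply_zero_zero]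
  ring

lemma pauliChannel_apply_one_one :
    (p0 • A + p1 • (!![0, 1; 1, 0] * A * !![0, 1; 1, 0])
      + p2 • (!![0, -Complex.I; Complex.I, 0] * A * !![0, -Complex.I; Complex.I, 0])
      + p3 • (!![1, 0; 0, -1] * A * !![1, 0; 0, -1]) : Matrix (Fin 2) (Fin 2) ℂ) 1 1
      = (p0 + p3) * A 1 1 + (p1 + p2) * A 0 0 := by
  simp only [Matrix.add_apply, Matrix.smul_apply, smul_eq_mul, pauliX_conj_apply_one_one,
    pauliY_conj_apply_one_one, pauliZ_conj_apply_one_one]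
  ring

end PauliChannel

lemma re_diag_add_of_trace_eq_one {A : Matrix (Fin 2) (Fin 2) ℂ} (h : A.trace = 1) :
    (A 0 0).re + (A 1 1).re = 1 := by
  simpa [trace_fin_two] using congrArg Complex.re h

theorem pauli_channel_affine_relation_general
    (Sp Sm : Matrix (Fin 2) (Fin 2) ℂ)
    (hSptr : Sp.trace = 1)
    (hSmtr : Sm.trace = 1)
    (X Y Z P1 : Matrix (Fin 2) (Fin 2) ℂ)
    (hX : X = !![0, 1; 1, 0])
    (hY : Y = !![0, -Complex.I; Complex.I, 0])
    (hZ : Z = !![1, 0; 0, -1])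
    (hP1 : P1 = !![1, 0; 0, 0])
    (p0 p1 p2 p3 : ℝ)
    (hsum : p0 + p1 + p2 + p3 = 1)
    (Spt Smt : Matrix (Fin 2) (Fin 2) ℂ)
    (hSpt : Spt = (p0 : ℂ) • Sp + (p1 : ℂ) • (X * Sp * X)
        + (p2 : ℂ) • (Y * Sp * Y) + (p3 : ℂ) • (Z * Sp * Z))
    (hSmt : Smt = (p0 : ℂ) • Sm + (p1 : ℂ) • (X * Sm * X)
        + (p2 : ℂ) • (Y * Sm * Y) + (p3 : ℂ) • (Z * Sm * Z))
    (As Ats : ℝ)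
    (hAs : As = (1 / 2) * ((P1 * Sp).trace).re
        + (1 / 2) * (((1 - P1) * Sm).trace).re)
    (hAts : Ats = (1 / 2) * ((P1 * Spt).trace).re
        + (1 / 2) * (((1 - P1) * Smt).trace).re) :
    Ats - 1 / 2 = (1 - 2 * (p1 + p2)) * (As - 1 / 2) := by
  subst hX hY hZ hP1 hSpt hSmt hAs hAts
  simp only [trace_proj_zero_mul, trace_one_sub_proj_zero_mul, pauliChannel_apply_zero_zero,
    pauliChannel_apply_one_one, ← Complex.ofReal_add, Complex.add_re, Complex.re_ofReal_mul]
  linear_combination (1 / 2) * ((Sp 0 0).re + (Sm 1 1).re) * hsum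
    + ((p1 + p2) / 2) * (re_diag_add_of_trace_eq_one hSptr + re_diag_add_of_trace_eq_one hSmtr)

/-- **Pauli noise (Example 5).** For the single-qubit Pauli channel
`σ ↦ p₀σ + p₁XσX + p₂YσY + p₃ZσZ` and the measurement `Π₁ = |0⟩⟨0|`, the
robustness accuracy satisfies `Ã_s − 1/2 = (1 − 2(p₁ + p₂))·(A_s − 1/2)`. -/
theorem pauli_channel_affine_relation
    (Sp Sm : Matrix (Fin 2) (Fin 2) ℂ)
    (hSp : Sp.PosSemidef) (hSptr : Sp.trace = 1)
    (hSm : Sm.PosSemidef) (hSmtr : Sm.trace = 1)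
    (X Y Z P1 : Matrix (Fin 2) (Fin 2) ℂ)
    (hX : X = !![0, 1; 1, 0])
    (hY : Y = !![0, -Complex.I; Complex.I, 0])
    (hZ : Z = !![1, 0; 0, -1])
    (hP1 : P1 = !![1, 0; 0, 0])
    (p0 p1 p2 p3 : ℝ)
    (hp0 : 0 ≤ p0) (hp1 : 0 ≤ p1) (hp2 : 0 ≤ p2) (hp3 : 0 ≤ p3)
    (hsum : p0 + p1 + p2 + p3 = 1)
    (Spt Smt : Matrix (Fin 2) (Fin 2) ℂ)
    (hSpt : Spt = (p0 : ℂ) • Sp + (p1 : ℂ) • (X * Sp * X)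
        + (p2 : ℂ) • (Y * Sp * Y) + (p3 : ℂ) • (Z * Sp * Z))
    (hSmt : Smt = (p0 : ℂ) • Sm + (p1 : ℂ) • (X * Sm * X)
        + (p2 : ℂ) • (Y * Sm * Y) + (p3 : ℂ) • (Z * Sm * Z))
    (As Ats : ℝ)
    (hAs : As = (1 / 2) * ((P1 * Sp).trace).re
        + (1 / 2) * (((1 - P1) * Sm).trace).re)
    (hAts : Ats = (1 / 2) * ((P1 * Spt).trace).re
        + (1 / 2) * (((1 - P1) * Smt).trace).re) :
    Ats - 1 / 2 = (1 - 2 * (p1 + p2)) * (As - 1 / 2) :=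
  pauli_channel_affine_relation_general Sp Sm hSptr hSmtr X Y Z P1 hX hY hZ hP1 p0 p1 p2 p3 hsum Spt
    Smt hSpt hSmt As Ats hAs hAts
end

section
/- Let p, a, b be real numbers with 1/2 < p ≤ 1, a ≥ 0, and 0 ≤ b ≤ 2. Define the accuracy of the first model A₁ := 1 − (1/2)pa − (1/2)(1 − p)b and its robustness accuracy Ã₁ := (1/2)(1 − p)a + (1/2)pb. If A₁ > p then Ã₁ < p. In other words: if the second model has accuracy A₂ = p equal to its robustness accuracy Ã₂ = p (it is invariant under the perturbation), then whenever the first model is strictly more accurate (A₁ > A₂) and p > 1/2, the first model is strictly less robust-accurate (Ã₁ < Ã₂). -/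
/-!
Adding the two accuracies of the first model, the terms in `a` and `b` combine into
`A₁ + Ã₁ = 1 + (p - 1/2)(b - a)`, which is at most `2p` because `b - a ≤ 2` and `p ≥ 1/2`.
So `A₁` and `Ã₁` cannot both reach `p`: once `A₁ > p`, necessarily `Ã₁ < p`.
-/

theorem accuracy_add_robustAccuracy_le_two_mul (p a b : ℝ) (hp : 1 / 2 ≤ p) (ha : 0 ≤ a)
    (hb : b ≤ 2) :
    (1 - (1 / 2) * p * a - (1 / 2) * (1 - p) * b) + ((1 / 2) * (1 - p) * a + (1 / 2) * p * b)
      ≤ 2 * p := by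
  have hsum : (1 - (1 / 2) * p * a - (1 / 2) * (1 - p) * b)
      + ((1 / 2) * (1 - p) * a + (1 / 2) * p * b) = 1 + (p - 1 / 2) * (b - a) := by ring
  have hgap : (p - 1 / 2) * (b - a) ≤ (p - 1 / 2) * 2 :=
    mul_le_mul_of_nonneg_left (by linarith) (by linarith)
  linarith

theorem example2_tradeoff_general
    (p a b : ℝ) (hp : 1 / 2 < p) (ha : 0 ≤ a) (hb2 : b ≤ 2)
    (A1 At1 : ℝ)
    (hA1 : A1 = 1 - (1 / 2) * p * a - (1 / 2) * (1 - p) * b)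
    (hAt1 : At1 = (1 / 2) * (1 - p) * a + (1 / 2) * p * b)
    (hacc : p < A1) :
    At1 < p := by
  have hsum := accuracy_add_robustAccuracy_le_two_mul p a b hp.le ha hb2
  rw [← hA1, ← hAt1] at hsum
  linarith

/-- **Example 2 trade-off.** With `1/2 < p ≤ 1`, `a ≥ 0`, `0 ≤ b ≤ 2`,
`A₁ = 1 − (1/2)pa − (1/2)(1 − p)b` and `Ã₁ = (1/2)(1 − p)a + (1/2)pb`, if the
first model is strictly more accurate than the second (`A₁ > p = A₂ = Ã₂`) then
it is strictly less robust-accurate (`Ã₁ < p`). -/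
theorem example2_tradeoff
    (p a b : ℝ) (hp : 1 / 2 < p) (hp1 : p ≤ 1) (ha : 0 ≤ a) (hb0 : 0 ≤ b) (hb2 : b ≤ 2)
    (A1 At1 : ℝ)
    (hA1 : A1 = 1 - (1 / 2) * p * a - (1 / 2) * (1 - p) * b)
    (hAt1 : At1 = (1 / 2) * (1 - p) * a + (1 / 2) * p * b)
    (hacc : p < A1) :
    At1 < p :=
  example2_tradeoff_general p a b hp ha hb2 A1 At1 hA1 hAt1 hacc
end
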